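/- arXiv:2412.10764 — 3 statements merged into one kernel-verified Lean document; each statement's English description precedes it below -/
import Mathlib

section
/- Let K ⊆ L be a differential field extension, and suppose K is not algebraically closed, the constant field C of K is a proper subfield of K, and K is weakly r-differentially closed in L. If Q_1,…,Q_m ∈ K{Y} are nonzero differential polynomials of order ≤ r (m ≥ 1) having a common zero in L, then they have a common zero in K. -/
open scoped Differential

/-!
Let `K ⊆ L` be a differential field extension (here: `L` a differential field and
`K` a subfield closed under the derivation).  Suppose `K` is not algebraically
closed, the constant field of `K` is a proper subfield of `K`, and `K` is weakly
`r`-differentially closed in `L`.  If nonzero differential polynomials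
`Q₁,…,Q_m ∈ K{Y}` of order `≤ r` (`m ≥ 1`) have a common zero in `L`, then they
have a common zero in `K`.  A differential polynomial of order `≤ r` over `K` is
encoded as an `MvPolynomial (Fin (r+1)) L` with all coefficients in `K`,
evaluated at `(y, y′, …, y⁽ʳ⁾)`.
-/

/-- `(y, y′, y″, …)`: the `n`-th iterated derivative of `y`. -/
noncomputable def dIter {L : Type*} [Field L] [Differential L] (y : L) (n : ℕ) : L :=
  (fun t : L => t′)^[n] y

/-- Evaluation of a differential polynomial of order at most `r` at `y`. -/
noncomputable def dEval {L : Type*} [Field L] [Differential L] {r : ℕ}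
    (P : MvPolynomial (Fin (r + 1)) L) (y : L) : L :=
  MvPolynomial.eval (fun i : Fin (r + 1) => dIter y (i : ℕ)) P

/-- All coefficients of `P` lie in the subfield `K`. -/
def CoeffsIn {L : Type*} [Field L] {n : ℕ} (K : Subfield L)
    (P : MvPolynomial (Fin n) L) : Prop :=
  ∀ m, MvPolynomial.coeff m P ∈ K

/-- `K` is weakly `r`-differentially closed in `L`: every nonzero differential
polynomial over `K` of order `≤ r` with a zero in `L` has a zero in `K`. -/
def WeaklyDClosedIn {L : Type*} [Field L] [Differential L] (K : Subfield L) (r : ℕ) : Prop :=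
  ∀ P : MvPolynomial (Fin (r + 1)) L, P ≠ 0 → CoeffsIn K P →
    (∃ y : L, dEval P y = 0) → ∃ y ∈ K, dEval P y = 0

/-!
If `K` is not algebraically closed, the homogenization `g(a, b) = bᵈ p(a/b)` of a polynomial
`p` without roots in `K` vanishes on `K²` only at the origin, and nesting `g` gives `Φ` with
the same property on `Kᵐ`. Then `P = Φ(Q₁, …, Q_m)` has the zero of the `Qᵢ` in `L`, so by weak
closedness it has a zero `y ∈ K`; as `K` is closed under the derivation, every `Qᵢ(y)` lies in
`K`, hence all vanish. `P ≠ 0` because `Q₁ ≠ 0` does not vanish on all of `K^{r+1}`, `K` being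
infinite: a finite field admits only the zero derivation.
-/

open MvPolynomial

section AnisotropicForms

variable {R : Type*} [CommSemiring R] {σ τ : Type*}

lemma Polynomial.eval_homogenize_of_eq_zero (p : Polynomial R) (n : ℕ) {x : Fin 2 → R}
    (hx : x 1 = 0) : MvPolynomial.eval x (p.homogenize n) = p.coeff n * x 0 ^ n := by
  simp only [Polynomial.homogenize, MvPolynomial.eval_sum, MvPolynomial.eval_monomial]
  rw [Finset.sum_eq_single (n, 0)]
  · simp
  · rintro ⟨k, l⟩ hkl hne
    have hl : l ≠ 0 := by
      rintro rfl
      exact hne (by simpa using Finset.HasAntidiagonal.mem_antidiagonal.1 hkl)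
    simp [hx, hl]
  · simp

lemma eval_bind₁_eq_zero_iff {Φ : MvPolynomial τ R} (hΦ : ∀ x, eval x Φ = 0 ↔ x = 0)
    (Q : τ → MvPolynomial σ R) (a : σ → R) :
    eval a (bind₁ Q Φ) = 0 ↔ ∀ i, eval a (Q i) = 0 := by
  rw [← aeval_eq_eval, aeval_bind₁, aeval_eq_eval, hΦ, funext_iff]
  rfl

lemma bind₁_ne_zero {R : Type*} [CommRing R] [IsDomain R] [Infinite R] {Φ : MvPolynomial τ R}
    (hΦ : ∀ x, eval x Φ = 0 ↔ x = 0) {Q : τ → MvPolynomial σ R} {i : τ} (hi : Q i ≠ 0) :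
    bind₁ Q Φ ≠ 0 := by
  refine fun h => hi (MvPolynomial.funext fun a => ?_)
  rw [map_zero]
  simpa using (eval_bind₁_eq_zero_iff hΦ Q a).1 (by simp [h]) i

end AnisotropicForms

section NotAlgClosed

variable {K : Type*} [Field K]

lemma exists_fin_two_eval_eq_zero_iff_of_not_isAlgClosed (hK : ¬ IsAlgClosed K) :
    ∃ g : MvPolynomial (Fin 2) K, ∀ x, eval x g = 0 ↔ x = 0 := by
  obtain ⟨p, hmonic, hirr, hroot⟩ :
      ∃ p : Polynomial K, p.Monic ∧ Irreducible p ∧ ∀ a, p.eval a ≠ 0 := by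
    by_contra! h
    exact hK (IsAlgClosed.of_exists_root K h)
  have hd : p.natDegree ≠ 0 := hirr.natDegree_pos.ne'
  refine ⟨p.homogenize p.natDegree, fun x => ⟨fun hx => ?_, ?_⟩⟩
  swap
  · rintro rfl
    rw [p.eval_homogenize_of_eq_zero _ rfl]
    simp [hd]
  by_cases hx1 : x 1 = 0
  · rw [p.eval_homogenize_of_eq_zero _ hx1, ← Polynomial.leadingCoeff, hmonic.leadingCoeff,
      one_mul, pow_eq_zero_iff hd] at hx
    ext i; fin_cases i <;> simp [hx, hx1]
  · rw [Polynomial.eval_homogenize le_rfl x hx1] at hx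
    exact absurd hx (mul_ne_zero (hroot _) (pow_ne_zero _ hx1))

lemma exists_eval_eq_zero_iff_of_not_isAlgClosed (hK : ¬ IsAlgClosed K) (m : ℕ) :
    ∃ Φ : MvPolynomial (Fin m) K, ∀ x, eval x Φ = 0 ↔ x = 0 := by
  induction m with
  | zero => exact ⟨0, fun x => by simp [Subsingleton.elim x 0]⟩
  | succ m ih =>
    obtain ⟨g, hg⟩ := exists_fin_two_eval_eq_zero_iff_of_not_isAlgClosed hK
    obtain ⟨Φ, hΦ⟩ := ih
    refine ⟨bind₁ ![rename Fin.castSucc Φ, X (Fin.last m)] g, fun x => ?_⟩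
    rw [eval_bind₁_eq_zero_iff hg, Fin.forall_fin_two, funext_iff, Fin.forall_fin_succ']
    simp [eval_rename, hΦ, funext_iff, Function.comp_def]

end NotAlgClosed

section Subfield

variable {L : Type*} [Field L] {K : Subfield L} {σ : Type*}

lemma CoeffsIn.exists_map_eq {n : ℕ} {P : MvPolynomial (Fin n) L} (hP : CoeffsIn K P) :
    ∃ q : MvPolynomial (Fin n) K, map K.subtype q = P := by
  refine mem_range_map_iff_coeffs_subset.2 fun c hc => ?_
  obtain ⟨m, -, rfl⟩ := mem_coeffs_iff.1 hc
  exact ⟨⟨_, hP m⟩, rfl⟩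

lemma coeffsIn_map_subtype {n : ℕ} (q : MvPolynomial (Fin n) K) : CoeffsIn K (map K.subtype q) :=
  fun m => by simp [coeff_map]

lemma eval_map_subtype_eq_zero_iff {Φ : MvPolynomial σ K} (hΦ : ∀ x, eval x Φ = 0 ↔ x = 0)
    {x : σ → L} (hx : ∀ i, x i ∈ K) : eval x (map K.subtype Φ) = 0 ↔ x = 0 := by
  lift x to σ → K using hx
  have : eval (fun i => (x i : L)) (map K.subtype Φ) = K.subtype (eval x Φ) := by
    rw [eval_map, eval, coe_eval₂Hom, eval₂_comp_left, RingHom.comp_id]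
    rfl
  rw [this, map_eq_zero_iff _ K.subtype_injective, hΦ]
  simp [funext_iff]

end Subfield

section Differential

variable {L : Type*} [Field L] [Differential L] {K : Subfield L}

lemma infinite_of_mem_of_deriv_ne_zero {x : L} (hx : x ∈ K) (hx' : x′ ≠ 0) : Infinite K := by
  refine not_finite_iff_infinite.1 fun _ => hx' ?_
  have : Fintype K := Fintype.ofFinite K
  have hpow : x ^ Fintype.card K = x := congr_arg K.subtype (FiniteField.pow_card (⟨x, hx⟩ : K))
  have hq : (Fintype.card K : L) = 0 := by
    rw [← map_natCast K.subtype, FiniteField.cast_card_eq_zero, map_zero]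
  rw [← hpow, Derivation.leibniz_pow, nsmul_eq_mul, hq, zero_mul]

lemma dIter_mem (hK : ∀ x ∈ K, x′ ∈ K) {y : L} (hy : y ∈ K) (n : ℕ) : dIter y n ∈ K := by
  induction n with
  | zero => exact hy
  | succ n ih => rw [dIter, Function.iterate_succ_apply']; exact hK _ ih

lemma dEval_mem (hK : ∀ x ∈ K, x′ ∈ K) {r : ℕ} {P : MvPolynomial (Fin (r + 1)) L}
    (hP : CoeffsIn K P) {y : L} (hy : y ∈ K) : dEval P y ∈ K :=
  eval_mem (fun m _ => hP m) fun i => dIter_mem hK hy i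

lemma dEval_bind₁ {r m : ℕ} (Q : Fin m → MvPolynomial (Fin (r + 1)) L)
    (Φ : MvPolynomial (Fin m) L) (y : L) :
    dEval (bind₁ Q Φ) y = eval (fun i => dEval (Q i) y) Φ := by
  simp only [dEval, ← aeval_eq_eval, aeval_bind₁]

end Differential

theorem common_zero_of_weakly_d_closed {L : Type*} [Field L] [Differential L]
    (K : Subfield L) (hKder : ∀ x ∈ K, x′ ∈ K)
    (hKnotAC : ¬ IsAlgClosed K)
    (hCK : ∃ x ∈ K, x′ ≠ 0)
    (r : ℕ) (hwk : WeaklyDClosedIn K r)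
    (m : ℕ) (hm : 1 ≤ m)
    (Q : Fin m → MvPolynomial (Fin (r + 1)) L)
    (hQ0 : ∀ i, Q i ≠ 0) (hQK : ∀ i, CoeffsIn K (Q i))
    (hzero : ∃ y : L, ∀ i, dEval (Q i) y = 0) :
    ∃ y ∈ K, ∀ i, dEval (Q i) y = 0 := by
  have : Infinite K := let ⟨_, hx, hx'⟩ := hCK; infinite_of_mem_of_deriv_ne_zero hx hx'
  obtain ⟨Φ, hΦ⟩ := exists_eval_eq_zero_iff_of_not_isAlgClosed hKnotAC m
  choose Q' hQ' using fun i => (hQK i).exists_map_eq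
  set P := bind₁ Q (map K.subtype Φ)
  have hP : P = map K.subtype (bind₁ Q' Φ) := by simp only [P, map_bind₁, hQ']
  have hP0 : P ≠ 0 := by
    rw [hP, map_ne_zero_iff _ (map_injective _ K.subtype_injective)]
    refine bind₁_ne_zero hΦ (i := ⟨0, hm⟩) fun h => hQ0 ⟨0, hm⟩ ?_
    rw [← hQ', h, map_zero]
  have hPL : ∃ y, dEval P y = 0 := by
    obtain ⟨y₀, hy₀⟩ := hzero
    refine ⟨y₀, ?_⟩
    rw [dEval_bind₁, funext hy₀]
    exact (eval_map_subtype_eq_zero_iff hΦ fun _ => K.zero_mem).2 rfl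
  obtain ⟨y, hyK, hy⟩ := hwk P hP0 (hP ▸ coeffsIn_map_subtype _) hPL
  rw [dEval_bind₁, eval_map_subtype_eq_zero_iff hΦ fun i => dEval_mem hKder (hQK i) hyK] at hy
  exact ⟨y, hyK, congr_fun hy⟩
end

section
/- Let c be a real number and consider R(Y) = Y(Y+1)/(c(Y+1)+Y) in ℝ(Y). Then 1/R = 1/(Y+1) + c/Y as rational functions, and if c ∉ ℚ then there is no a ∈ ℝ^× and U ∈ ℝ(Y)^× with 1/R = a·U′/U, where ′ denotes the derivation d/dY on ℝ(Y). -/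
/-!
`1/R = 1/(Y+1) + c/Y` has simple poles at `-1` and `0` with residues `1` and `c`. A logarithmic
derivative `U′/U` has at most simple poles, and its residue at `r` is the order of `U` at `r`, an
integer: writing the numerator and denominator of `U` as `(Y - r)^n g` with `g(r) ≠ 0`, the
log-derivative is additive and `((Y - r)^n)′/(Y - r)^n = n/(Y - r)`. Comparing residues in
`1/R = a U′/U` at `-1` and `0` gives `1 = a l` and `c = a k` with `k, l ∈ ℤ`, so `c = k/l`.
-/

open scoped Polynomial

namespace Derivation

variable {R A : Type*} [CommRing R] [Field A] [Algebra R A] (D : Derivation R A A)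

def logDeriv (a : A) : A := D a / a

variable {D}

theorem logDeriv_mul {a b : A} (ha : a ≠ 0) (hb : b ≠ 0) :
    D.logDeriv (a * b) = D.logDeriv a + D.logDeriv b := by
  simp only [logDeriv, leibniz, smul_eq_mul]
  field_simp
  ring

theorem logDeriv_pow (a : A) (n : ℕ) : D.logDeriv (a ^ n) = n * D.logDeriv a := by
  rcases eq_or_ne a 0 with rfl | ha
  · cases n <;> simp [logDeriv]
  · simp only [logDeriv, leibniz_pow, nsmul_eq_mul, smul_eq_mul]
    rcases n with _ | n
    · simp
    · rw [Nat.add_sub_cancel, pow_succ]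
      field_simp

theorem logDeriv_div {a b : A} (ha : a ≠ 0) (hb : b ≠ 0) :
    D.logDeriv (a / b) = D.logDeriv a - D.logDeriv b := by
  simp only [logDeriv, leibniz_div, smul_eq_mul]
  field_simp

end Derivation

namespace RatFunc

open scoped RatFunc

variable {K : Type*} [Field K]

theorem algebraMap_ne_zero_of_eval_ne_zero {G : K[X]} {r : K} (hG : G.eval r ≠ 0) :
    algebraMap K[X] K⟮X⟯ G ≠ 0 :=
  algebraMap_ne_zero fun h ↦ hG (by simp [h])

def IsRegularAt (f : K⟮X⟯) (r : K) : Prop :=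
  ∃ F G : K[X], G.eval r ≠ 0 ∧ f = algebraMap K[X] K⟮X⟯ F / algebraMap K[X] K⟮X⟯ G

namespace IsRegularAt

variable {f g : K⟮X⟯} {r : K}

theorem add (hf : IsRegularAt f r) (hg : IsRegularAt g r) : IsRegularAt (f + g) r := by
  obtain ⟨F, G, hG, rfl⟩ := hf
  obtain ⟨F', G', hG', rfl⟩ := hg
  refine ⟨F * G' + G * F', G * G', by simp [hG, hG'], ?_⟩
  rw [div_add_div _ _ (algebraMap_ne_zero_of_eval_ne_zero hG)
    (algebraMap_ne_zero_of_eval_ne_zero hG')]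
  simp only [map_add, map_mul]

theorem sub (hf : IsRegularAt f r) (hg : IsRegularAt g r) : IsRegularAt (f - g) r := by
  obtain ⟨F, G, hG, rfl⟩ := hf
  obtain ⟨F', G', hG', rfl⟩ := hg
  refine ⟨F * G' - G * F', G * G', by simp [hG, hG'], ?_⟩
  rw [div_sub_div _ _ (algebraMap_ne_zero_of_eval_ne_zero hG)
    (algebraMap_ne_zero_of_eval_ne_zero hG')]
  simp only [map_sub, map_mul]

theorem const_mul (a : K) (hf : IsRegularAt f r) : IsRegularAt (C a * f) r := by
  obtain ⟨F, G, hG, rfl⟩ := hf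
  exact ⟨Polynomial.C a * F, G, hG, by rw [map_mul, algebraMap_C, mul_div_assoc]⟩

end IsRegularAt

theorem X_sub_C_ne_zero (r : K) : (X - C r : K⟮X⟯) ≠ 0 := by
  simpa [algebraMap_X] using algebraMap_ne_zero (Polynomial.X_sub_C_ne_zero r)

theorem isRegularAt_zero (r : K) : IsRegularAt 0 r :=
  ⟨0, 1, by simp, by simp⟩

theorem isRegularAt_inv_X_sub_C {r s : K} (h : r ≠ s) : IsRegularAt (X - C s)⁻¹ r :=
  ⟨1, Polynomial.X - Polynomial.C s, by simpa [sub_eq_zero] using h, by simp [algebraMap_X]⟩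

theorem eq_zero_of_isRegularAt_C_mul_inv_X_sub_C {ρ r : K}
    (h : IsRegularAt (C ρ * (X - C r)⁻¹) r) : ρ = 0 := by
  obtain ⟨F, G, hG, h⟩ := h
  rw [← div_eq_mul_inv,
    div_eq_div_iff (X_sub_C_ne_zero r) (algebraMap_ne_zero_of_eval_ne_zero hG)] at h
  have hpoly : Polynomial.C ρ * G = F * (Polynomial.X - Polynomial.C r) :=
    algebraMap_injective K (by simpa [algebraMap_C, algebraMap_X] using h)
  simpa [hG] using congrArg (Polynomial.eval r) hpoly

/-- Only simple poles are covered: `f - ρ / (X - r)` must have no pole at `r`. -/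
def HasResidueAt (f : K⟮X⟯) (r ρ : K) : Prop :=
  IsRegularAt (f - C ρ * (X - C r)⁻¹) r

namespace HasResidueAt

variable {f g : K⟮X⟯} {r ρ σ : K}

theorem unique (hρ : HasResidueAt f r ρ) (hσ : HasResidueAt f r σ) : ρ = σ := by
  have h := hσ.sub hρ
  rw [show f - C σ * (X - C r)⁻¹ - (f - C ρ * (X - C r)⁻¹) = C (ρ - σ) * (X - C r)⁻¹ by
    rw [map_sub]; ring] at h
  exact sub_eq_zero.mp (eq_zero_of_isRegularAt_C_mul_inv_X_sub_C h)

theorem add (hf : HasResidueAt f r ρ) (hg : HasResidueAt g r σ) :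
    HasResidueAt (f + g) r (ρ + σ) := by
  unfold HasResidueAt
  convert IsRegularAt.add hf hg using 1
  rw [map_add]; ring

theorem sub (hf : HasResidueAt f r ρ) (hg : HasResidueAt g r σ) :
    HasResidueAt (f - g) r (ρ - σ) := by
  unfold HasResidueAt
  convert IsRegularAt.sub hf hg using 1
  rw [map_sub]; ring

theorem const_mul (a : K) (hf : HasResidueAt f r ρ) : HasResidueAt (C a * f) r (a * ρ) := by
  unfold HasResidueAt
  convert IsRegularAt.const_mul a hf using 1
  rw [map_mul]; ring

end HasResidueAt

theorem IsRegularAt.hasResidueAt_zero {f : K⟮X⟯} {r : K} (hf : IsRegularAt f r) :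
    HasResidueAt f r 0 := by
  simpa [HasResidueAt] using hf

theorem hasResidueAt_inv_X_sub_C_self (r : K) : HasResidueAt (X - C r)⁻¹ r 1 := by
  simpa [HasResidueAt] using isRegularAt_zero r

variable {D : Derivation K K⟮X⟯ K⟮X⟯}

theorem derivation_algebraMap (hD : D X = 1) (p : K[X]) :
    D (algebraMap K[X] K⟮X⟯ p) = algebraMap K[X] K⟮X⟯ (Polynomial.derivative p) := by
  rw [← aeval_X_left_eq_algebraMap, ← aeval_X_left_eq_algebraMap, D.map_aeval, hD, smul_eq_mul,
    mul_one]

theorem hasResidueAt_logDeriv_algebraMap (hD : D X = 1) {p : K[X]} (hp : p ≠ 0) (r : K) :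
    HasResidueAt (D.logDeriv (algebraMap K[X] K⟮X⟯ p)) r (p.rootMultiplicity r) := by
  obtain ⟨g, hpg, hg⟩ := p.exists_eq_pow_rootMultiplicity_mul_and_not_dvd hp r
  set n := p.rootMultiplicity r
  have hgr : g.eval r ≠ 0 := fun h ↦ hg (Polynomial.dvd_iff_isRoot.mpr h)
  have hlog : D.logDeriv (X - C r) = (X - C r)⁻¹ := by
    rw [Derivation.logDeriv, map_sub, hD, ← algebraMap_eq_C, D.map_algebraMap, sub_zero, one_div]
  have hreg : IsRegularAt (D.logDeriv (algebraMap K[X] K⟮X⟯ g)) r :=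
    ⟨Polynomial.derivative g, g, hgr, by rw [Derivation.logDeriv, derivation_algebraMap hD]⟩
  rw [hpg, map_mul, map_pow, map_sub, algebraMap_X, algebraMap_C,
    Derivation.logDeriv_mul (pow_ne_zero _ (X_sub_C_ne_zero r))
      (algebraMap_ne_zero_of_eval_ne_zero hgr),
    Derivation.logDeriv_pow, hlog]
  simpa using ((hasResidueAt_inv_X_sub_C_self r).const_mul (n : K)).add hreg.hasResidueAt_zero

theorem hasResidueAt_logDeriv (hD : D X = 1) {U : K⟮X⟯} (hU : U ≠ 0) (r : K) :
    HasResidueAt (D.logDeriv U) r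
      ((U.num.rootMultiplicity r - U.denom.rootMultiplicity r : ℤ) : K) := by
  push_cast
  nth_rw 1 [← num_div_denom U]
  rw [Derivation.logDeriv_div (algebraMap_ne_zero (num_ne_zero hU))
    (algebraMap_ne_zero U.denom_ne_zero)]
  exact (hasResidueAt_logDeriv_algebraMap hD (num_ne_zero hU) r).sub
    (hasResidueAt_logDeriv_algebraMap hD U.denom_ne_zero r)

theorem inv_X_mul_X_add_one_div (c : K) :
    (X * (X + 1) / (C c * (X + 1) + X))⁻¹ = (X + 1)⁻¹ + C c * X⁻¹ := by
  have hX : (X : K⟮X⟯) ≠ 0 := by simpa using X_sub_C_ne_zero (0 : K)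
  have hX1 : (X + 1 : K⟮X⟯) ≠ 0 := by simpa using X_sub_C_ne_zero (-1 : K)
  rw [inv_div]
  field_simp
  ring

end RatFunc

theorem one_div_R_decomposition_and_not_logderivative (c : ℝ)
    (D : Derivation ℝ (RatFunc ℝ) (RatFunc ℝ)) (hD : D RatFunc.X = 1) :
    (RatFunc.X * (RatFunc.X + 1) / (RatFunc.C c * (RatFunc.X + 1) + RatFunc.X))⁻¹ =
        (RatFunc.X + 1)⁻¹ + RatFunc.C c * RatFunc.X⁻¹ ∧
    (Irrational c →
      ¬ ∃ a : ℝ, a ≠ 0 ∧ ∃ U : RatFunc ℝ, U ≠ 0 ∧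
        (RatFunc.X * (RatFunc.X + 1) / (RatFunc.C c * (RatFunc.X + 1) + RatFunc.X))⁻¹ =
          RatFunc.C a * (D U / U)) := by
  open RatFunc in
  refine ⟨inv_X_mul_X_add_one_div c, ?_⟩
  rintro hc ⟨a, -, U, hU, h⟩
  rw [inv_X_mul_X_add_one_div] at h
  have hres0 : HasResidueAt ((X + 1)⁻¹ + C c * X⁻¹) 0 c := by
    simpa using (isRegularAt_inv_X_sub_C (by norm_num : (0 : ℝ) ≠ -1)).hasResidueAt_zero.add
      ((hasResidueAt_inv_X_sub_C_self 0).const_mul c)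
  have hres1 : HasResidueAt ((X + 1)⁻¹ + C c * X⁻¹) (-1) 1 := by
    simpa using (hasResidueAt_inv_X_sub_C_self (-1)).add
      ((isRegularAt_inv_X_sub_C (by norm_num : (-1 : ℝ) ≠ 0)).const_mul c).hasResidueAt_zero
  obtain ⟨k, hk⟩ : ∃ k : ℤ, HasResidueAt (D.logDeriv U) 0 k :=
    ⟨_, hasResidueAt_logDeriv hD hU 0⟩
  obtain ⟨l, hl⟩ : ∃ l : ℤ, HasResidueAt (D.logDeriv U) (-1) l :=
    ⟨_, hasResidueAt_logDeriv hD hU (-1)⟩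
  have hck : c = a * k := hres0.unique (h ▸ hk.const_mul a)
  have hal : 1 = a * l := hres1.unique (h ▸ hl.const_mul a)
  have hl0 : (l : ℝ) ≠ 0 := right_ne_zero_of_mul (hal ▸ one_ne_zero)
  exact hc.ne_rational k l (by rw [eq_div_iff hl0, hck, mul_right_comm, ← hal, one_mul])
end

section
/- Let c ∈ ℝ^{>0}, a ∈ ℝ^×, and y ∈ 𝕋^× with |y|^c (y+1) = a e^x. Then y ∼ b e^{x/(c+1)}, where b = a^{1/(c+1)} if a > 0 and b = −(−a)^{1/(c+1)} if a < 0. (Here f ∼ g means f − g ≺ g.) -/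
/-!
Let `c ∈ ℝ^{>0}`, `a ∈ ℝ^×`, and `y ∈ 𝕋^×` with `|y|^c (y+1) = a e^x`.  Then
`y ∼ b e^{x/(c+1)}` where `b = a^{1/(c+1)}` if `a > 0` and
`b = −(−a)^{1/(c+1)}` if `a < 0`.  (`f ∼ g` means `f − g ≺ g`, and `f ≺ g`
means `|f| < r|g|` for every real `r > 0`.)

`𝕋` is axiomatized as a linearly ordered field `T`, an `ℝ`-algebra with
strictly monotone structure map, equipped with strictly increasing positive
`exp` satisfying `exp (s+t) = exp s · exp t`, compatible with the real
exponential, with right inverse `log` on the positive elements; `E = e^x` is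
(any) positive element with `1 ≺ E` and `D E = E` for the derivation — for this
purely asymptotic statement only `1 ≺ E` is needed.  Powers are
`y^c := exp (c · log y)`.
-/

/-- `f ≺ g`: `|f| < r·|g|` for every real `r > 0`. -/
def Prec {T : Type*} [Field T] [LinearOrder T] [IsStrictOrderedRing T] [Algebra ℝ T] (f g : T) : Prop :=
  ∀ r : ℝ, 0 < r → |f| < algebraMap ℝ T r * |g|

/-!
Write `w = |y|`, `β = |a|^{1/(c+1)}` and `u = e^{x/(c+1)} = exp ((1/(c+1)) log E)`. The sign of `y`
is that of `a` (for `a > 0` and `-1 < y < 0` the left side would be `< 1 ≺ a e^x`), so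
`w^c (w ± 1) = |a| E`. For every real `p > 0`,
`(p u)^c (p u ± 1) = p^{c+1} E ± p^c E^{c/(c+1)}` and `E^{c/(c+1)} ≺ E`, so the left side lies
below `|a| E` when `p < β` and above it when `p > β`. As `w ↦ w^c (w ± 1)` is monotone,
`(1 - r) β u < w < (1 + r) β u` for every real `r > 0`, i.e. `w ∼ β u`.
-/

section

variable {T : Type*} [Field T] [LinearOrder T] [Algebra ℝ T]

structure IsExpLog (exp log : T → T) : Prop where
  exp_pos : ∀ t, 0 < exp t
  strictMono : StrictMono exp
  exp_add : ∀ s t, exp (s + t) = exp s * exp t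
  exp_algebraMap : ∀ r : ℝ, exp (algebraMap ℝ T r) = algebraMap ℝ T (Real.exp r)
  exp_log : ∀ t, 0 < t → exp (log t) = t

namespace IsExpLog

variable {exp log : T → T}

theorem exp_zero (h : IsExpLog exp log) : exp 0 = 1 := by
  simpa using h.exp_algebraMap 0

theorem log_exp (h : IsExpLog exp log) (x : T) : log (exp x) = x :=
  h.strictMono.injective (h.exp_log _ (h.exp_pos x))

theorem log_one (h : IsExpLog exp log) : log 1 = 0 := by
  rw [← h.exp_zero, h.log_exp]

theorem log_le_log (h : IsExpLog exp log) {s t : T} (hs : 0 < s) (hst : s ≤ t) :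
    log s ≤ log t :=
  h.strictMono.le_iff_le.1 (by rwa [h.exp_log s hs, h.exp_log t (hs.trans_le hst)])

theorem exp_mul_log_algebraMap_mul_exp (h : IsExpLog exp log) {p : ℝ} (hp : 0 < p) (q : ℝ)
    (X : T) :
    exp (algebraMap ℝ T q * log (algebraMap ℝ T p * exp X)) =
      algebraMap ℝ T (p ^ q) * exp (algebraMap ℝ T q * X) := by
  have hlog : algebraMap ℝ T p * exp X = exp (algebraMap ℝ T (Real.log p) + X) := by
    rw [h.exp_add, h.exp_algebraMap, Real.exp_log hp]
  rw [hlog, h.log_exp, mul_add, ← map_mul, h.exp_add, h.exp_algebraMap,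
    Real.rpow_def_of_pos hp, mul_comm q]

end IsExpLog

variable [IsStrictOrderedRing T]

/-- Every nonnegative real is a square, so a ring map out of `ℝ` into an ordered field is monotone. -/
theorem algebraMap_real_strictMono : StrictMono (algebraMap ℝ T) :=
  (ringHom_monotone (fun _ ↦ Real.isSquare_iff.mpr) (algebraMap ℝ T)).strictMono_of_injective
    (algebraMap ℝ T).injective

theorem algebraMap_real_pos {r : ℝ} (hr : 0 < r) : 0 < algebraMap ℝ T r := by
  simpa using algebraMap_real_strictMono (T := T) hr

theorem Prec.neg {f g : T} (h : Prec f g) : Prec (-f) (-g) := by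
  simpa only [Prec, abs_neg] using h

theorem Prec.of_abs_le_mul {f f' g : T} {k : ℝ} (h : Prec f g) (hk : 0 < k)
    (hf : |f'| ≤ algebraMap ℝ T k * |f|) : Prec f' g := fun r hr ↦
  calc |f'| ≤ algebraMap ℝ T k * |f| := hf
    _ < algebraMap ℝ T k * (algebraMap ℝ T (r / k) * |g|) :=
        mul_lt_mul_of_pos_left (h _ (by positivity)) (algebraMap_real_pos hk)
    _ = algebraMap ℝ T r * |g| := by rw [← mul_assoc, ← map_mul, mul_div_cancel₀ _ hk.ne']

theorem Prec.lt_algebraMap_mul {x g : T} {q A : ℝ} (h : Prec (x - algebraMap ℝ T q * g) g)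
    (hg : 0 < g) (hqA : q < A) : x < algebraMap ℝ T A * g := by
  have := h (A - q) (sub_pos.2 hqA)
  rw [abs_of_pos hg, map_sub, sub_mul] at this
  linarith [le_abs_self (x - algebraMap ℝ T q * g)]

theorem Prec.algebraMap_mul_lt {x g : T} {q A : ℝ} (h : Prec (x - algebraMap ℝ T q * g) g)
    (hg : 0 < g) (hAq : A < q) : algebraMap ℝ T A * g < x := by
  have := h (q - A) (sub_pos.2 hAq)
  rw [abs_of_pos hg, map_sub, sub_mul] at this
  linarith [neg_abs_le (x - algebraMap ℝ T q * g)]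

theorem prec_sub_of_forall_lt {v w : T} (hv : 0 < v)
    (h : ∀ r : ℝ, 0 < r → algebraMap ℝ T (1 - r) * v < w ∧ w < algebraMap ℝ T (1 + r) * v) :
    Prec (w - v) v := fun r hr ↦ by
  obtain ⟨hlo, hhi⟩ := h r hr
  rw [map_sub, map_one, sub_mul, one_mul] at hlo
  rw [map_add, map_one, add_mul, one_mul] at hhi
  rw [abs_of_pos hv, abs_sub_lt_iff]
  constructor <;> linarith

namespace IsExpLog

variable {exp log : T → T}

theorem exp_mul_log_le_exp_mul_log (h : IsExpLog exp log) {c : ℝ} (hc : 0 ≤ c) {s t : T}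
    (hs : 0 < s) (hst : s ≤ t) :
    exp (algebraMap ℝ T c * log s) ≤ exp (algebraMap ℝ T c * log t) :=
  h.strictMono.monotone <| mul_le_mul_of_nonneg_left (h.log_le_log hs hst)
    (by simpa using algebraMap_real_strictMono (T := T) |>.monotone hc)

theorem algebraMap_lt_log_of_prec_one (h : IsExpLog exp log) {E : T} (hE0 : 0 < E)
    (hE : Prec 1 E) (s : ℝ) : algebraMap ℝ T s < log E := by
  refine h.strictMono.lt_iff_lt.1 ?_
  rw [h.exp_algebraMap, h.exp_log E hE0]
  have hsmall := hE (Real.exp (-s)) (Real.exp_pos _)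
  rw [abs_one, abs_of_pos hE0] at hsmall
  calc algebraMap ℝ T (Real.exp s) = algebraMap ℝ T (Real.exp s) * 1 := (mul_one _).symm
    _ < algebraMap ℝ T (Real.exp s) * (algebraMap ℝ T (Real.exp (-s)) * E) :=
        mul_lt_mul_of_pos_left hsmall (algebraMap_real_pos (Real.exp_pos s))
    _ = E := by rw [← mul_assoc, ← map_mul, ← Real.exp_add, add_neg_cancel, Real.exp_zero,
        map_one, one_mul]

theorem prec_exp_mul_of_lt (h : IsExpLog exp log) {L : T}
    (hL : ∀ s : ℝ, algebraMap ℝ T s < L) {β γ : ℝ} (hβγ : β < γ) :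
    Prec (exp (algebraMap ℝ T β * L)) (exp (algebraMap ℝ T γ * L)) := fun r hr ↦ by
  rw [abs_of_pos (h.exp_pos _), abs_of_pos (h.exp_pos _), ← Real.exp_log hr,
    ← h.exp_algebraMap, ← h.exp_add]
  apply h.strictMono
  have hgap := mul_lt_mul_of_pos_left (hL (-Real.log r / (γ - β)))
    (algebraMap_real_pos (sub_pos.2 hβγ))
  rw [← map_mul, mul_div_cancel₀ _ (sub_pos.2 hβγ).ne', map_sub, map_neg, sub_mul] at hgap
  linarith

theorem prec_root_sub (h : IsExpLog exp log) {L : T} (hL : ∀ s : ℝ, algebraMap ℝ T s < L)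
    {c : ℝ} (hc : 0 < c) {p : ℝ} (hp : 0 < p) {d : T} (hd : |d| ≤ 1) :
    Prec (exp (algebraMap ℝ T c * log (algebraMap ℝ T p * exp (algebraMap ℝ T (1 / (c + 1)) * L))) *
        (algebraMap ℝ T p * exp (algebraMap ℝ T (1 / (c + 1)) * L) + d) -
        algebraMap ℝ T (p ^ (c + 1)) * exp L) (exp L) := by
  rw [h.exp_mul_log_algebraMap_mul_exp hp]
  set m : ℝ := 1 / (c + 1)
  set X := exp (algebraMap ℝ T c * (algebraMap ℝ T m * L))
  have hcm : c * m + m = 1 := by simp only [m]; field_simp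
  have hsplit : X * exp (algebraMap ℝ T m * L) = exp L := by
    rw [← h.exp_add, ← mul_assoc, ← add_mul, ← map_mul, ← map_add, hcm, map_one, one_mul]
  have hsmall : Prec X (exp L) := by
    simpa only [map_mul, mul_assoc, map_one, one_mul] using
      h.prec_exp_mul_of_lt hL (show c * m < 1 by linarith [show 0 < m by positivity])
  refine hsmall.of_abs_le_mul (Real.rpow_pos_of_pos hp c) ?_
  have hpc := algebraMap_real_pos (T := T) (Real.rpow_pos_of_pos hp c)
  have hX : 0 < X := h.exp_pos _
  rw [← hsplit, Real.rpow_add_one hp.ne', map_mul, abs_of_pos hX]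
  calc _ = |algebraMap ℝ T (p ^ c) * X * d| := by congr 1; ring
    _ = algebraMap ℝ T (p ^ c) * X * |d| := by rw [abs_mul, abs_of_pos (mul_pos hpc hX)]
    _ ≤ algebraMap ℝ T (p ^ c) * X := mul_le_of_le_one_right (mul_pos hpc hX).le hd

theorem monotoneOn_root (h : IsExpLog exp log) {c : ℝ} (hc : 0 ≤ c) (d : T) :
    MonotoneOn (fun w ↦ exp (algebraMap ℝ T c * log w) * (w + d)) {w | 0 < w ∧ 0 ≤ w + d} :=
  fun _ hs _ _ hst ↦
    mul_le_mul (h.exp_mul_log_le_exp_mul_log hc hs.1 hst) (add_le_add_left hst d) hs.2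
      (h.exp_pos _).le

theorem prec_sub_of_root (h : IsExpLog exp log) {L : T} (hL : ∀ s : ℝ, algebraMap ℝ T s < L)
    {c : ℝ} (hc : 0 < c) {A : ℝ} (hA : 0 < A) {d w : T} (hd : |d| ≤ 1) (hw : 0 < w)
    (hwd : 0 ≤ w + d) (H : exp (algebraMap ℝ T c * log w) * (w + d) = algebraMap ℝ T A * exp L) :
    Prec (w - algebraMap ℝ T (A ^ (1 / (c + 1))) * exp (algebraMap ℝ T (1 / (c + 1)) * L))
      (algebraMap ℝ T (A ^ (1 / (c + 1))) * exp (algebraMap ℝ T (1 / (c + 1)) * L)) := by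
  set m : ℝ := 1 / (c + 1)
  set β := A ^ m
  set u := exp (algebraMap ℝ T m * L)
  have hβ : 0 < β := Real.rpow_pos_of_pos hA m
  have hβA : β ^ (c + 1) = A := by
    rw [← Real.rpow_mul hA.le, one_div_mul_cancel (by linarith), Real.rpow_one]
  have hu : Prec 1 u := by
    simpa only [map_zero, zero_mul, h.exp_zero] using
      h.prec_exp_mul_of_lt hL (show 0 < m by positivity)
  have hmem : ∀ p : ℝ, 0 < p → algebraMap ℝ T p * u ∈ {w | 0 < w ∧ 0 ≤ w + d} := fun p hp ↦ by
    have hpu := hu p hp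
    rw [abs_one, abs_of_pos (h.exp_pos _)] at hpu
    exact ⟨by linarith, by linarith [neg_abs_le d]⟩
  have hlt : ∀ p : ℝ, 0 < p → p < β → algebraMap ℝ T p * u < w := fun p hp hpβ ↦
    (h.monotoneOn_root hc.le d).reflect_lt (hmem p hp) ⟨hw, hwd⟩ <| H ▸
      (h.prec_root_sub hL hc hp hd).lt_algebraMap_mul (h.exp_pos L)
        (hβA ▸ Real.rpow_lt_rpow hp.le hpβ (by linarith))
  have hgt : ∀ p : ℝ, β < p → w < algebraMap ℝ T p * u := fun p hβp ↦
    (h.monotoneOn_root hc.le d).reflect_lt ⟨hw, hwd⟩ (hmem p (hβ.trans hβp)) <| H ▸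
      (h.prec_root_sub hL hc (hβ.trans hβp) hd).algebraMap_mul_lt (h.exp_pos L)
        (hβA ▸ Real.rpow_lt_rpow hβ.le hβp (by linarith))
  refine prec_sub_of_forall_lt (mul_pos (algebraMap_real_pos hβ) (h.exp_pos _)) fun r hr ↦ ?_
  simp only [← mul_assoc, ← map_mul]
  constructor
  · rcases lt_or_ge r 1 with hr1 | hr1
    · exact hlt _ (mul_pos (by linarith) hβ) (by nlinarith)
    · have hp : algebraMap ℝ T ((1 - r) * β) ≤ 0 := by
        simpa using algebraMap_real_strictMono (T := T) |>.monotone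
          (mul_nonpos_of_nonpos_of_nonneg (by linarith : 1 - r ≤ 0) hβ.le)
      exact (mul_nonpos_of_nonpos_of_nonneg hp (h.exp_pos _).le).trans_lt hw
  · exact hgt _ (by nlinarith)

theorem add_one_neg_of_root (h : IsExpLog exp log) {c a : ℝ} (ha : a < 0) {E y : T} (hE : 0 < E)
    (hroot : exp (algebraMap ℝ T c * log |y|) * (y + 1) = algebraMap ℝ T a * E) : y + 1 < 0 := by
  refine neg_of_mul_neg_right (hroot ▸ mul_neg_of_neg_of_pos ?_ hE) (h.exp_pos _).le
  simpa using algebraMap_real_strictMono (T := T) ha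

/-- For `a > 0` the root cannot lie in `(-1, 0)`, where `|y|^c (y + 1) < 1 ≺ a E`. -/
theorem pos_of_root (h : IsExpLog exp log) {c : ℝ} (hc : 0 ≤ c) {a : ℝ} (ha : 0 < a) {E y : T}
    (hE0 : 0 < E) (hE : Prec 1 E) (hy : y ≠ 0)
    (hroot : exp (algebraMap ℝ T c * log |y|) * (y + 1) = algebraMap ℝ T a * E) : 0 < y := by
  have haE : 1 < algebraMap ℝ T a * E := by simpa [abs_of_pos hE0] using hE a ha
  have hy1 : 0 < y + 1 := pos_of_mul_pos_right (by linarith) (h.exp_pos _).le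
  by_contra hy0
  have hyneg : y < 0 := lt_of_le_of_ne (not_lt.1 hy0) hy
  have hpow : exp (algebraMap ℝ T c * log |y|) ≤ 1 := by
    simpa [h.log_one, h.exp_zero] using h.exp_mul_log_le_exp_mul_log hc (abs_pos.2 hy)
      (show |y| ≤ 1 by rw [abs_of_neg hyneg]; linarith)
  linarith [mul_le_mul_of_nonneg_right hpow hy1.le]

end IsExpLog

end

theorem transseries_asymptotics_of_root_general
    (T : Type*) [Field T] [LinearOrder T] [IsStrictOrderedRing T] [Algebra ℝ T]
    (exp log : T → T)
    (hexp_pos : ∀ t, 0 < exp t)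
    (hexp_mono : StrictMono exp)
    (hexp_add : ∀ s t, exp (s + t) = exp s * exp t)
    (hexp_real : ∀ r : ℝ, exp (algebraMap ℝ T r) = algebraMap ℝ T (Real.exp r))
    (hexp_log : ∀ t : T, 0 < t → exp (log t) = t)
    (E : T) (hEpos : 0 < E) (hE : Prec 1 E)
    (c : ℝ) (hc : 0 < c) (a : ℝ) (ha : a ≠ 0)
    (y : T) (hy : y ≠ 0)
    (hroot : exp (algebraMap ℝ T c * log |y|) * (y + 1) = algebraMap ℝ T a * E) :
    Prec (y - algebraMap ℝ T (if 0 < a then a ^ (1 / (c + 1) : ℝ)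
            else -((-a) ^ (1 / (c + 1) : ℝ))) *
          exp (algebraMap ℝ T (1 / (c + 1)) * log E))
         (algebraMap ℝ T (if 0 < a then a ^ (1 / (c + 1) : ℝ)
            else -((-a) ^ (1 / (c + 1) : ℝ))) *
          exp (algebraMap ℝ T (1 / (c + 1)) * log E)) := by
  have h : IsExpLog exp log := ⟨hexp_pos, hexp_mono, hexp_add, hexp_real, hexp_log⟩
  have hL := h.algebraMap_lt_log_of_prec_one hEpos hE
  rcases ha.lt_or_gt with ha | ha
  · have hy1 := h.add_one_neg_of_root ha hEpos hroot
    rw [abs_of_neg (by linarith : y < 0), ← h.exp_log E hEpos] at hroot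
    have hw := h.prec_sub_of_root hL hc (neg_pos.2 ha) (d := -1) (w := -y) (by simp) (by linarith)
      (by linarith) (by rw [map_neg, neg_mul, ← hroot]; ring)
    rw [if_neg ha.not_gt]
    convert hw.neg using 1 <;> simp only [map_neg, neg_mul, neg_sub, sub_neg_eq_add]
    ring
  · have hy0 := h.pos_of_root hc.le ha hEpos hE hy hroot
    rw [abs_of_pos hy0, ← h.exp_log E hEpos] at hroot
    rw [if_pos ha]
    exact h.prec_sub_of_root hL hc ha (by simp) hy0 (by linarith) hroot

theorem transseries_asymptotics_of_root
    (T : Type*) [Field T] [LinearOrder T] [IsStrictOrderedRing T] [Algebra ℝ T]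
    (hmono : StrictMono (algebraMap ℝ T))
    (exp log : T → T)
    (hexp_pos : ∀ t, 0 < exp t)
    (hexp_mono : StrictMono exp)
    (hexp_add : ∀ s t, exp (s + t) = exp s * exp t)
    (hexp_real : ∀ r : ℝ, exp (algebraMap ℝ T r) = algebraMap ℝ T (Real.exp r))
    (hexp_log : ∀ t : T, 0 < t → exp (log t) = t)
    (E : T) (hEpos : 0 < E) (hE : Prec 1 E)
    (c : ℝ) (hc : 0 < c) (a : ℝ) (ha : a ≠ 0)
    (y : T) (hy : y ≠ 0)
    (hroot : exp (algebraMap ℝ T c * log |y|) * (y + 1) = algebraMap ℝ T a * E) :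
    Prec (y - algebraMap ℝ T (if 0 < a then a ^ (1 / (c + 1) : ℝ)
            else -((-a) ^ (1 / (c + 1) : ℝ))) *
          exp (algebraMap ℝ T (1 / (c + 1)) * log E))
         (algebraMap ℝ T (if 0 < a then a ^ (1 / (c + 1) : ℝ)
            else -((-a) ^ (1 / (c + 1) : ℝ))) *
          exp (algebraMap ℝ T (1 / (c + 1)) * log E)) :=
  transseries_asymptotics_of_root_general T exp log hexp_pos hexp_mono hexp_add hexp_real hexp_log E
    hEpos hE c hc a ha y hy hroot
end
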